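/- arXiv:2306.14311 — 2 statements merged into one kernel-verified Lean document; each statement's English description precedes it below -/
import Mathlib

section
/- Let g : ℝ → ℝ be K-times continuously differentiable and suppose there exist constants b₁, b₂ ≥ 0 and an integer M ≥ K+1 such that |g^{(K)}(x') − g^{(K)}(x)| ≤ b₁|x'−x| + b₂|x'−x|^{M−K} for all x, x'. Let X* and ε be independent real random variables with E[ε] = 0 and all moments E[|ε|^m], m ≤ M, finite, and suppose E[|g^{(k)}(X*)|] < ∞ for k = 0,...,K. Then |E[g(X*+ε)] − E[g(X*)] − Σ_{k=2}^{K} (E[εᵏ]/k!)·E[g^{(k)}(X*)]| ≤ (b₁/K!)·E[|ε|^{K+1}] + (b₂/K!)·E[|ε|^{M}]. -/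
/-!
Pointwise, Taylor's theorem with Lagrange remainder at order `K - 1` gives
`g (x + e) = ∑_{k ≤ K} g⁽ᵏ⁾(x) eᵏ / k! + (g⁽ᴷ⁾(ξ) - g⁽ᴷ⁾(x)) eᴷ / K!` with `|ξ - x| ≤ |e|`,
and the modulus of `g⁽ᴷ⁾` bounds the last term by `b₁ |e|^(K+1) / K! + b₂ |e|^M / K!`.
Taking expectations at `x = X*`, `e = ε`, independence factors `E[g⁽ᵏ⁾(X*) εᵏ]` into
`E[εᵏ] E[g⁽ᵏ⁾(X*)]`; the `k = 0` term is `E[g(X*)]` and the `k = 1` term vanishes as `E[ε] = 0`.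
-/

open MeasureTheory ProbabilityTheory Finset
open scoped Nat

theorem taylor_mean_remainder_lagrange_of_contDiff {f : ℝ → ℝ} {n : ℕ}
    (hf : ContDiff ℝ (n + 1) f) (x₀ x : ℝ) :
    ∃ x' ∈ Set.uIcc x₀ x,
      f x - ∑ k ∈ range (n + 1), iteratedDeriv k f x₀ * (x - x₀) ^ k / k ! =
        iteratedDeriv (n + 1) f x' * (x - x₀) ^ (n + 1) / (n + 1)! := by
  rcases eq_or_ne x₀ x with rfl | hx
  · exact ⟨x₀, Set.left_mem_uIcc, by simp [sum_range_succ']⟩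
  obtain ⟨x', hx', h⟩ := taylor_mean_remainder_lagrange_iteratedDeriv hx hf.contDiffOn
  refine ⟨x', Set.uIoo_subset_uIcc_self hx', ?_⟩
  rw [← h, taylor_within_apply]
  congr 1
  refine sum_congr rfl fun k hk => ?_
  rw [iteratedDerivWithin_eq_iteratedDeriv (uniqueDiffOn_uIcc hx)
    (hf.of_le (by exact_mod_cast (mem_range_succ_iff.1 hk).trans n.le_succ)).contDiffAt
    Set.left_mem_uIcc, smul_eq_mul]
  ring

theorem abs_sub_taylor_le_of_iteratedDeriv_sub_le {f : ℝ → ℝ} {K : ℕ} (hK : 1 ≤ K)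
    (hf : ContDiff ℝ K f) {x e C : ℝ}
    (hC : ∀ y ∈ Set.uIcc x (x + e), |iteratedDeriv K f y - iteratedDeriv K f x| ≤ C) :
    |f (x + e) - ∑ k ∈ range (K + 1), iteratedDeriv k f x * e ^ k / k !|
      ≤ C * |e| ^ K / K ! := by
  obtain ⟨n, rfl⟩ := Nat.exists_eq_add_of_le' hK
  obtain ⟨x', hx', h⟩ := taylor_mean_remainder_lagrange_of_contDiff hf x (x + e)
  have hremainder : f (x + e) - ∑ k ∈ range (n + 1 + 1), iteratedDeriv k f x * e ^ k / k ! =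
      (iteratedDeriv (n + 1) f x' - iteratedDeriv (n + 1) f x) * e ^ (n + 1) / (n + 1)! := by
    rw [add_sub_cancel_left] at h
    rw [sum_range_succ, ← sub_sub, h]
    ring
  rw [hremainder, abs_div, abs_mul, abs_pow, Nat.abs_cast]
  gcongr
  exact hC x' hx'

theorem abs_sub_taylor_le_of_iteratedDeriv_lipschitz_add_pow {g : ℝ → ℝ} {K M : ℕ}
    (hK : 1 ≤ K) (hM : K + 1 ≤ M) {b₁ b₂ : ℝ} (hb₁ : 0 ≤ b₁) (hb₂ : 0 ≤ b₂) (hg : ContDiff ℝ K g)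
    (hlip : ∀ x x' : ℝ, |iteratedDeriv K g x' - iteratedDeriv K g x|
        ≤ b₁ * |x' - x| + b₂ * |x' - x| ^ (M - K))
    (x e : ℝ) :
    |g (x + e) - ∑ k ∈ range (K + 1), iteratedDeriv k g x * e ^ k / k !|
      ≤ b₁ / K ! * |e| ^ (K + 1) + b₂ / K ! * |e| ^ M := by
  have hC : ∀ y ∈ Set.uIcc x (x + e),
      |iteratedDeriv K g y - iteratedDeriv K g x| ≤ b₁ * |e| + b₂ * |e| ^ (M - K) := by
    intro y hy
    have hyx : |y - x| ≤ |e| := by simpa using Set.abs_sub_left_of_mem_uIcc hy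
    calc _ ≤ b₁ * |y - x| + b₂ * |y - x| ^ (M - K) := hlip x y
      _ ≤ b₁ * |e| + b₂ * |e| ^ (M - K) := by gcongr
  calc _ ≤ (b₁ * |e| + b₂ * |e| ^ (M - K)) * |e| ^ K / K ! :=
        abs_sub_taylor_le_of_iteratedDeriv_sub_le hK hg hC
    _ = b₁ / K ! * |e| ^ (K + 1) + b₂ / K ! * |e| ^ (M - K + K) := by ring
    _ = _ := by rw [Nat.sub_add_cancel (by omega)]

theorem sum_range_eq_add_sum_Icc_two {a c : ℕ → ℝ} (h₀ : a 0 = 1) (h₁ : a 1 = 0) {K : ℕ}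
    (hK : 1 ≤ K) :
    ∑ k ∈ range (K + 1), a k / k ! * c k = c 0 + ∑ k ∈ Icc 2 K, a k / k ! * c k := by
  rw [range_eq_Ico, ← sum_Ico_consecutive _ (Nat.zero_le 2) (by omega : 2 ≤ K + 1),
    Ico_add_one_right_eq_Icc]
  simp [sum_range_succ, h₀, h₁]

section Expectation

variable {Ω : Type*} [MeasurableSpace Ω] {μ : Measure Ω} {X ε : Ω → ℝ} {g : ℝ → ℝ} {K : ℕ}

theorem ProbabilityTheory.IndepFun.iteratedDeriv_comp_pow (hind : IndepFun X ε μ)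
    (hg : ContDiff ℝ K g) {k : ℕ} (hk : k ≤ K) :
    IndepFun (fun ω => iteratedDeriv k g (X ω)) (fun ω => ε ω ^ k) μ :=
  hind.comp (hg.continuous_iteratedDeriv k (by exact_mod_cast hk)).measurable
    (measurable_id.pow_const k)

theorem integrable_iteratedDeriv_comp_mul_pow (hind : IndepFun X ε μ) (hg : ContDiff ℝ K g)
    (hgk : ∀ k ≤ K, Integrable (fun ω => iteratedDeriv k g (X ω)) μ)
    (hεk : ∀ k ≤ K, Integrable (fun ω => ε ω ^ k) μ) {k : ℕ} (hk : k ∈ range (K + 1)) :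
    Integrable (fun ω => iteratedDeriv k g (X ω) * ε ω ^ k / k !) μ :=
  have hk : k ≤ K := mem_range_succ_iff.1 hk
  ((hind.iteratedDeriv_comp_pow hg hk).integrable_mul (hgk k hk) (hεk k hk)).div_const _

theorem integral_taylor_comp_of_indepFun (hind : IndepFun X ε μ) (hε : Measurable ε)
    (hg : ContDiff ℝ K g)
    (hgk : ∀ k ≤ K, Integrable (fun ω => iteratedDeriv k g (X ω)) μ)
    (hεk : ∀ k ≤ K, Integrable (fun ω => ε ω ^ k) μ) :
    ∫ ω, (∑ k ∈ range (K + 1), iteratedDeriv k g (X ω) * ε ω ^ k / k !) ∂μ =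
      ∑ k ∈ range (K + 1), (∫ ω, ε ω ^ k ∂μ) / k ! * (∫ ω, iteratedDeriv k g (X ω) ∂μ) := by
  rw [integral_finsetSum _ fun k hk => integrable_iteratedDeriv_comp_mul_pow hind hg hgk hεk hk]
  refine sum_congr rfl fun k hk => ?_
  have hk : k ≤ K := mem_range_succ_iff.1 hk
  rw [integral_div, (hind.iteratedDeriv_comp_pow hg hk).integral_fun_mul_eq_mul_integral
    (hgk k hk).aestronglyMeasurable (hε.pow_const k).aestronglyMeasurable]
  ring

end Expectation

theorem Kth_order_expansion_bound_general
    {Ω : Type*} [MeasurableSpace Ω] (μ : Measure Ω) [IsProbabilityMeasure μ]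
    (K M : ℕ) (hK : 2 ≤ K) (hM : K + 1 ≤ M)
    (g : ℝ → ℝ) (b₁ b₂ : ℝ) (hb₁ : 0 ≤ b₁) (hb₂ : 0 ≤ b₂)
    (hg : ContDiff ℝ K g)
    (hlip : ∀ x x' : ℝ, |iteratedDeriv K g x' - iteratedDeriv K g x|
        ≤ b₁ * |x' - x| + b₂ * |x' - x| ^ (M - K))
    (Xs ε : Ω → ℝ) (hε : Measurable ε)
    (hindep : IndepFun Xs ε μ)
    (hmean : ∫ ω, ε ω ∂μ = 0)
    (hmom : ∀ m ≤ M, Integrable (fun ω => |ε ω| ^ m) μ)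
    (hgk : ∀ k ≤ K, Integrable (fun ω => iteratedDeriv k g (Xs ω)) μ)
    (hgXe : Integrable (fun ω => g (Xs ω + ε ω)) μ) :
    |(∫ ω, g (Xs ω + ε ω) ∂μ) - (∫ ω, g (Xs ω) ∂μ)
        - ∑ k ∈ Finset.Icc 2 K,
            (∫ ω, ε ω ^ k ∂μ) / (Nat.factorial k : ℝ)
              * (∫ ω, iteratedDeriv k g (Xs ω) ∂μ)|
      ≤ b₁ / (Nat.factorial K : ℝ) * (∫ ω, |ε ω| ^ (K + 1) ∂μ)
        + b₂ / (Nat.factorial K : ℝ) * (∫ ω, |ε ω| ^ M ∂μ) := by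
  have hεk : ∀ k ≤ K, Integrable (fun ω => ε ω ^ k) μ := fun k hk =>
    (hmom k (by omega)).mono' (hε.pow_const k).aestronglyMeasurable (.of_forall fun ω => by simp)
  set T := fun ω => ∑ k ∈ range (K + 1), iteratedDeriv k g (Xs ω) * ε ω ^ k / (k ! : ℝ)
  have hT : Integrable T μ := integrable_finsetSum _ fun k hk =>
    integrable_iteratedDeriv_comp_mul_pow hindep hg hgk hεk hk
  have hET : ∫ ω, T ω ∂μ = (∫ ω, g (Xs ω) ∂μ) + ∑ k ∈ Finset.Icc 2 K,
      (∫ ω, ε ω ^ k ∂μ) / (Nat.factorial k : ℝ) * (∫ ω, iteratedDeriv k g (Xs ω) ∂μ) := by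
    rw [integral_taylor_comp_of_indepFun hindep hε hg hgk hεk,
      sum_range_eq_add_sum_Icc_two (by simp) (by simpa using hmean) (by omega)]
    simp only [iteratedDeriv_zero]
  have hB : Integrable (fun ω => b₁ / K ! * |ε ω| ^ (K + 1) + b₂ / K ! * |ε ω| ^ M) μ :=
    ((hmom (K + 1) hM).const_mul _).add ((hmom M le_rfl).const_mul _)
  calc _ = |∫ ω, (g (Xs ω + ε ω) - T ω) ∂μ| := by rw [integral_sub hgXe hT, hET, sub_sub]
    _ ≤ ∫ ω, |g (Xs ω + ε ω) - T ω| ∂μ := abs_integral_le_integral_abs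
    _ ≤ ∫ ω, (b₁ / K ! * |ε ω| ^ (K + 1) + b₂ / K ! * |ε ω| ^ M) ∂μ :=
      integral_mono (hgXe.sub hT).abs hB fun ω =>
        abs_sub_taylor_le_of_iteratedDeriv_lipschitz_add_pow (by omega) hM hb₁ hb₂ hg hlip
          (Xs ω) (ε ω)
    _ = _ := by
      rw [integral_add ((hmom (K + 1) hM).const_mul _) ((hmom M le_rfl).const_mul _),
        integral_const_mul, integral_const_mul]

theorem Kth_order_expansion_bound
    {Ω : Type*} [MeasurableSpace Ω] (μ : Measure Ω) [IsProbabilityMeasure μ]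
    (K M : ℕ) (hK : 2 ≤ K) (hM : K + 1 ≤ M)
    (g : ℝ → ℝ) (b₁ b₂ : ℝ) (hb₁ : 0 ≤ b₁) (hb₂ : 0 ≤ b₂)
    (hg : ContDiff ℝ K g)
    (hlip : ∀ x x' : ℝ, |iteratedDeriv K g x' - iteratedDeriv K g x|
        ≤ b₁ * |x' - x| + b₂ * |x' - x| ^ (M - K))
    (Xs ε : Ω → ℝ) (hXs : Measurable Xs) (hε : Measurable ε)
    (hindep : IndepFun Xs ε μ)
    (hmean : ∫ ω, ε ω ∂μ = 0)
    (hmom : ∀ m ≤ M, Integrable (fun ω => |ε ω| ^ m) μ)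
    (hgk : ∀ k ≤ K, Integrable (fun ω => iteratedDeriv k g (Xs ω)) μ)
    (hgXe : Integrable (fun ω => g (Xs ω + ε ω)) μ) :
    |(∫ ω, g (Xs ω + ε ω) ∂μ) - (∫ ω, g (Xs ω) ∂μ)
        - ∑ k ∈ Finset.Icc 2 K,
            (∫ ω, ε ω ^ k ∂μ) / (Nat.factorial k : ℝ)
              * (∫ ω, iteratedDeriv k g (Xs ω) ∂μ)|
      ≤ b₁ / (Nat.factorial K : ℝ) * (∫ ω, |ε ω| ^ (K + 1) ∂μ)
        + b₂ / (Nat.factorial K : ℝ) * (∫ ω, |ε ω| ^ M ∂μ) :=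
  Kth_order_expansion_bound_general μ K M hK hM g b₁ b₂ hb₁ hb₂ hg hlip Xs ε hε hindep hmean hmom
    hgk hgXe
end

section
/- Under the hypotheses of the K-th order expansion (g is K-times continuously differentiable with the generalized Lipschitz condition on g^{(K)}, X* ⟂ ε, E[ε] = 0, suitable moment bounds), and with γ₂,...,γ_K defined recursively by γ₂ = E[ε²]/2, γ₃ = E[ε³]/6, γₖ = E[εᵏ]/k! − Σ_{ℓ=2}^{k−2}(E[ε^{k−ℓ}]/(k−ℓ)!)γ_ℓ for k ≥ 4, define the corrected function ψ(x) = g(x) − Σ_{k=2}^{K} γₖ g^{(k)}(x). Then |E[ψ(X*+ε)] − E[g(X*)]| ≤ C·(E[|ε|^{K+1}] + E[|ε|^{M}]), where C depends only on K, the Lipschitz constants, the moment bounds E[|g^{(k)}(X*)|], E[b_j(X*)], and the bounds on the standardized moments of ε. -/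
open MeasureTheory ProbabilityTheory
open scoped BigOperators

/-- The recursively defined bias-correction coefficients `γₖ` built from the
moments `m k = E[εᵏ]` of the measurement error. -/
noncomputable def gammaCoef (m : ℕ → ℝ) : ℕ → ℝ
  | 0 => 0
  | 1 => 0
  | 2 => m 2 / 2
  | 3 => m 3 / 6
  | k + 4 =>
      m (k + 4) / (Nat.factorial (k + 4) : ℝ) -
        ∑ ℓ ∈ (Finset.Icc 2 (k + 2)).attach,
          m (k + 4 - ℓ.1) / (Nat.factorial (k + 4 - ℓ.1) : ℝ) * gammaCoef m ℓ.1
  termination_by k => k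
  decreasing_by
    have := (Finset.mem_Icc.mp ℓ.2).2
    omega

/-- The corrected moment function `ψ(x) = g(x) - ∑_{k=2}^K γₖ g⁽ᵏ⁾(x)`. -/
noncomputable def correctedFun (g : ℝ → ℝ) (K : ℕ) (γ : ℕ → ℝ) (x : ℝ) : ℝ :=
  g x - ∑ k ∈ Finset.Icc 2 K, γ k * iteratedDeriv k g x

/-! Expand each `g⁽ᵏ⁾(X* + ε)` to order `K - k` around `X*`. By independence the expectation of
every Taylor term factors as `E[g⁽ᵏ⁺ʲ⁾(X*)] · E[εʲ] / j!`, and the Lipschitz condition on `g⁽ᴷ⁾`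
bounds the remainder by `b₁ E|ε|^(K-k+1) + b₂ E|ε|^(M-k)`. The recursion defining `γ` says exactly
that `(E[εʳ]/r!)ᵣ` convolved with `(1, 0, -γ₂, …, -γ_K)` is the unit sequence, so in `E[ψ(X* + ε)]`
all Taylor terms cancel except `E[g(X*)]`. What is left are the remainders, weighted by
`|γₖ| ≲ σᵏ`; and `σᵏ E|ε|^(n-k) ≲ σⁿ ≤ E|ε|ⁿ` by the standardized moment bound and Jensen. -/

open Finset
open scoped Nat

lemma gammaCoef_of_two_le (m : ℕ → ℝ) {k : ℕ} (hk : 2 ≤ k) :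
    gammaCoef m k =
      m k / (k ! : ℝ) - ∑ ℓ ∈ Icc 2 (k - 2), m (k - ℓ) / (k - ℓ)! * gammaCoef m ℓ := by
  match k, hk with
  | 2, _ => simp [gammaCoef]
  | 3, _ => simp [gammaCoef, Nat.factorial]
  | k + 4, _ =>
    rw [gammaCoef, sum_attach (Icc 2 (k + 2)) fun ℓ => m (k + 4 - ℓ) / (k + 4 - ℓ)! * gammaCoef m ℓ]
    rfl

lemma gammaCoef_convolution (m : ℕ → ℝ) (h0 : m 0 = 1) (h1 : m 1 = 0) (r : ℕ) :
    m r / (r ! : ℝ) - ∑ ℓ ∈ Icc 2 r, m (r - ℓ) / (r - ℓ)! * gammaCoef m ℓ =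
      if r = 0 then 1 else 0 := by
  match r with
  | 0 => simp [h0]
  | 1 => simp [h1]
  | 2 => simp [gammaCoef, h0]
  | s + 3 =>
    rw [sum_Icc_succ_top (by omega), sum_Icc_succ_top (by omega),
      gammaCoef_of_two_le m (by omega : 2 ≤ s + 3)]
    simp [h0, h1]

/-- With `G i = E[g⁽ⁱ⁾(X*)]`, `m j = E[εʲ]` and `X* ⟂ ε`, this is the expectation of the Taylor
polynomial of `g⁽ᵏ⁾` of order `K - k` at `X*`, evaluated at `ε`. -/
noncomputable def taylorMoment (G m : ℕ → ℝ) (K k : ℕ) : ℝ :=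
  ∑ j ∈ range (K - k + 1), G (k + j) * m j / j !

lemma taylorMoment_eq_sum_Icc (G m : ℕ → ℝ) {K k : ℕ} (hk : k ≤ K) :
    taylorMoment G m K k = ∑ r ∈ Icc k K, G r * m (r - k) / (r - k)! := by
  rw [taylorMoment, ← Ico_add_one_right_eq_Icc, sum_Ico_eq_sum_range,
    show K + 1 - k = K - k + 1 by omega]
  simp only [Nat.add_sub_cancel_left]

theorem taylorMoment_sub_sum_gammaCoef (G m : ℕ → ℝ) (h0 : m 0 = 1) (h1 : m 1 = 0) (K : ℕ) :
    taylorMoment G m K 0 - ∑ k ∈ Icc 2 K, gammaCoef m k * taylorMoment G m K k = G 0 := by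
  have hswap : ∑ k ∈ Icc 2 K, gammaCoef m k * taylorMoment G m K k =
      ∑ r ∈ Icc 0 K, G r * ∑ k ∈ Icc 2 r, m (r - k) / (r - k)! * gammaCoef m k := by
    calc _ = ∑ k ∈ Icc 2 K, ∑ r ∈ Icc k K, gammaCoef m k * (G r * m (r - k) / (r - k)!) :=
          sum_congr rfl fun k hk => by
            rw [taylorMoment_eq_sum_Icc G m (mem_Icc.1 hk).2, mul_sum]
      _ = ∑ r ∈ Icc 0 K, ∑ k ∈ Icc 2 r, gammaCoef m k * (G r * m (r - k) / (r - k)!) :=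
          sum_comm' fun k r => by simp only [mem_Icc]; omega
      _ = _ := sum_congr rfl fun r _ => by rw [mul_sum]; exact sum_congr rfl fun k _ => by ring
  rw [hswap, taylorMoment_eq_sum_Icc G m (Nat.zero_le K), ← sum_sub_distrib]
  simp_rw [Nat.sub_zero, mul_div_assoc, ← mul_sub, gammaCoef_convolution m h0 h1, mul_ite,
    mul_one, mul_zero]
  simp

noncomputable def gammaBound (c : ℝ) : ℕ → ℝ
  | 0 => 0
  | 1 => 0
  | k + 2 => c / (k + 2)! + ∑ ℓ ∈ (Icc 2 k).attach, c / (k + 2 - ℓ.1)! * gammaBound c ℓ.1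
  decreasing_by have := (mem_Icc.1 ℓ.2).2; omega

lemma gammaBound_add_two (c : ℝ) (k : ℕ) :
    gammaBound c (k + 2) = c / (k + 2)! + ∑ ℓ ∈ Icc 2 k, c / (k + 2 - ℓ)! * gammaBound c ℓ := by
  rw [gammaBound, sum_attach (Icc 2 k) fun ℓ => c / (k + 2 - ℓ)! * gammaBound c ℓ]

lemma gammaBound_nonneg {c : ℝ} (hc : 0 ≤ c) (k : ℕ) : 0 ≤ gammaBound c k := by
  induction k using Nat.strong_induction_on with
  | _ k ih =>
    match k with
    | 0 | 1 => simp [gammaBound]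
    | k + 2 =>
      rw [gammaBound_add_two]
      exact add_nonneg (by positivity) (sum_nonneg fun ℓ hℓ =>
        mul_nonneg (by positivity) (ih ℓ (by have := (mem_Icc.1 hℓ).2; omega)))

theorem abs_gammaCoef_le (m : ℕ → ℝ) {c s : ℝ} (hc : 0 ≤ c) (hs : 0 ≤ s) {K : ℕ}
    (hm : ∀ j ≤ K, |m j| ≤ c * s ^ j) {k : ℕ} (hk : k ≤ K) :
    |gammaCoef m k| ≤ gammaBound c k * s ^ k := by
  induction k using Nat.strong_induction_on with
  | _ k ih =>
    match k with
    | 0 | 1 => simp [gammaCoef, gammaBound]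
    | k + 2 =>
      rw [gammaCoef_of_two_le m (by omega), gammaBound_add_two, add_mul, sum_mul,
        Nat.add_sub_cancel]
      refine (abs_sub _ _).trans (add_le_add ?_ ((abs_sum_le_sum_abs _ _).trans
        (sum_le_sum fun ℓ hℓ => ?_)))
      · rw [abs_div, Nat.abs_cast, div_mul_eq_mul_div]
        gcongr
        exact hm _ hk
      · have hℓ := mem_Icc.1 hℓ
        calc |m (k + 2 - ℓ) / (k + 2 - ℓ)! * gammaCoef m ℓ|
            ≤ c * s ^ (k + 2 - ℓ) / (k + 2 - ℓ)! * (gammaBound c ℓ * s ^ ℓ) := by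
              rw [abs_mul, abs_div, Nat.abs_cast]
              gcongr
              · exact hm _ (by omega)
              · exact ih ℓ (by omega) (by omega)
          _ = c / (k + 2 - ℓ)! * gammaBound c ℓ * s ^ (k + 2) := by
              rw [← pow_sub_mul_pow s (by omega : ℓ ≤ k + 2)]
              ring

lemma abs_sub_sum_le {s : Finset ℕ} {x c β : ℝ} {y D : ℕ → ℝ} (hx : |x| ≤ β)
    (hy : ∀ k ∈ s, |y k| ≤ D k * c * β) :
    |x - ∑ k ∈ s, y k| ≤ (1 + c * ∑ k ∈ s, D k) * β :=
  calc |x - ∑ k ∈ s, y k| ≤ |x| + ∑ k ∈ s, |y k| :=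
        (abs_sub _ _).trans (add_le_add_right (abs_sum_le_sum_abs _ _) _)
    _ ≤ β + ∑ k ∈ s, D k * c * β := add_le_add hx (sum_le_sum hy)
    _ = (1 + c * ∑ k ∈ s, D k) * β := by rw [← sum_mul, ← sum_mul]; ring

noncomputable def taylorSum (f : ℝ → ℝ) (n : ℕ) (x e : ℝ) : ℝ :=
  ∑ j ∈ range (n + 1), iteratedDeriv j f x * e ^ j / j !

lemma taylorSum_zero_right (f : ℝ → ℝ) (n : ℕ) (x : ℝ) : taylorSum f n x 0 = f x := by
  simp [taylorSum, sum_range_succ']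

lemma hasDerivAt_taylorSum_succ (f : ℝ → ℝ) (n : ℕ) (x e : ℝ) :
    HasDerivAt (taylorSum f (n + 1) x) (taylorSum (deriv f) n x e) e := by
  have h := HasDerivAt.fun_sum (u := range (n + 2)) fun j _ =>
    ((hasDerivAt_pow j e).const_mul (iteratedDeriv j f x)).div_const (j ! : ℝ)
  rw [sum_range_succ'] at h
  refine h.congr_deriv ?_
  simp only [taylorSum, Nat.cast_zero, zero_mul, mul_zero, zero_div, add_zero,
    Nat.add_sub_cancel, ← iteratedDeriv_succ']
  refine sum_congr rfl fun j _ => ?_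
  rw [Nat.factorial_succ]
  push_cast
  field_simp

theorem abs_sub_taylorSum_le {ρ : ℝ → ℝ} (hρ : MonotoneOn ρ (Set.Ici 0)) :
    ∀ {n : ℕ} {f : ℝ → ℝ}, ContDiff ℝ n f →
      (∀ x x', |iteratedDeriv n f x' - iteratedDeriv n f x| ≤ ρ |x' - x|) →
      ∀ x e, |f (x + e) - taylorSum f n x e| ≤ |e| ^ n * ρ |e|
  | 0, f, _, hmod, x, e => by simpa [taylorSum] using hmod x (x + e)
  | n + 1, f, hf, hmod, x, e => by
    rw [Nat.cast_add, Nat.cast_one, contDiff_succ_iff_deriv] at hf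
    have hρ_nonneg : ∀ t, 0 ≤ ρ |t| := fun t => by
      simpa using (abs_nonneg _).trans (hmod 0 t)
    have hderiv : ∀ t, |deriv f (x + t) - taylorSum (deriv f) n x t| ≤ |t| ^ n * ρ |t| :=
      abs_sub_taylorSum_le hρ hf.2.2 (by simpa only [iteratedDeriv_succ'] using hmod) x
    have hF : ∀ t, HasDerivAt (fun t => f (x + t) - taylorSum f (n + 1) x t)
        (deriv f (x + t) - taylorSum (deriv f) n x t) t := fun t =>
      ((hf.1 (x + t)).hasDerivAt.comp_const_add x t).sub (hasDerivAt_taylorSum_succ f n x t)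
    have hbound : ∀ t ∈ Metric.closedBall (0 : ℝ) |e|,
        ‖deriv f (x + t) - taylorSum (deriv f) n x t‖ ≤ |e| ^ n * ρ |e| := fun t ht => by
      rw [mem_closedBall_zero_iff, Real.norm_eq_abs] at ht
      exact (hderiv t).trans (mul_le_mul (pow_le_pow_left₀ (abs_nonneg t) ht n)
        (hρ (abs_nonneg t) (abs_nonneg e) ht) (hρ_nonneg t) (by positivity))
    have := (convex_closedBall (0 : ℝ) |e|).norm_image_sub_le_of_norm_hasDerivWithin_le
      (fun t _ => (hF t).hasDerivWithinAt) hbound (Metric.mem_closedBall_self (abs_nonneg e))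
      (mem_closedBall_zero_iff.2 le_rfl)
    simpa [taylorSum_zero_right, pow_succ, mul_right_comm] using this

lemma iteratedDeriv_iteratedDeriv (f : ℝ → ℝ) (k j : ℕ) :
    iteratedDeriv j (iteratedDeriv k f) = iteratedDeriv (k + j) f := by
  simp only [iteratedDeriv_eq_iterate, add_comm k j, Function.iterate_add_apply]

lemma ContDiff.iteratedDeriv_of_le {f : ℝ → ℝ} {K k : ℕ} (hf : ContDiff ℝ K f) (hk : k ≤ K) :
    ContDiff ℝ (K - k : ℕ) (iteratedDeriv k f) := by
  rw [iteratedDeriv_eq_iterate]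
  exact ContDiff.iterate_deriv' _ k (by rwa [Nat.sub_add_cancel hk])

section Expectation

variable {Ω : Type*} [MeasurableSpace Ω] {μ : Measure Ω} {X ε : Ω → ℝ}

lemma integrable_taylorSum_and_integral_eq {f : ℝ → ℝ} {n : ℕ} (hf : ContDiff ℝ n f)
    (hind : IndepFun X ε μ) (hfX : ∀ j ≤ n, Integrable (fun ω => iteratedDeriv j f (X ω)) μ)
    (hε : ∀ j ≤ n, Integrable (fun ω => ε ω ^ j) μ) :
    Integrable (fun ω => taylorSum f n (X ω) (ε ω)) μ ∧
      ∫ ω, taylorSum f n (X ω) (ε ω) ∂μ =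
        ∑ j ∈ range (n + 1), (∫ ω, iteratedDeriv j f (X ω) ∂μ) * (∫ ω, ε ω ^ j ∂μ) / j ! := by
  have hind' : ∀ j ≤ n, IndepFun (fun ω => iteratedDeriv j f (X ω)) (fun ω => ε ω ^ j) μ :=
    fun j hj => hind.comp (hf.continuous_iteratedDeriv j (mod_cast hj)).measurable
      (measurable_id.pow_const j)
  have hterm : ∀ j ∈ range (n + 1),
      Integrable (fun ω => iteratedDeriv j f (X ω) * ε ω ^ j / j !) μ := fun j hj =>
    have hj := Nat.lt_succ_iff.1 (mem_range.1 hj)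
    ((hind' j hj).integrable_mul (hfX j hj) (hε j hj)).div_const _
  refine ⟨integrable_finsetSum _ hterm, ?_⟩
  simp only [taylorSum]
  rw [integral_finsetSum _ hterm]
  refine sum_congr rfl fun j hj => ?_
  have hj := Nat.lt_succ_iff.1 (mem_range.1 hj)
  rw [integral_div]
  exact congrArg (· / _) ((hind' j hj).integral_mul_eq_mul_integral
    (hfX j hj).aestronglyMeasurable (hε j hj).aestronglyMeasurable)

theorem abs_integral_sub_sum_moments_le {f : ℝ → ℝ} {n p : ℕ} {b₁ b₂ : ℝ} (hb₁ : 0 ≤ b₁)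
    (hb₂ : 0 ≤ b₂) (hf : ContDiff ℝ n f)
    (hmod : ∀ x x', |iteratedDeriv n f x' - iteratedDeriv n f x|
      ≤ b₁ * |x' - x| + b₂ * |x' - x| ^ p)
    (hind : IndepFun X ε μ) (hfX : ∀ j ≤ n, Integrable (fun ω => iteratedDeriv j f (X ω)) μ)
    (hε : ∀ j ≤ n, Integrable (fun ω => ε ω ^ j) μ)
    (hε₁ : Integrable (fun ω => |ε ω| ^ (n + 1)) μ)
    (hε₂ : Integrable (fun ω => |ε ω| ^ (n + p)) μ)
    (hfXε : Integrable (fun ω => f (X ω + ε ω)) μ) :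
    |(∫ ω, f (X ω + ε ω) ∂μ) -
        ∑ j ∈ range (n + 1), (∫ ω, iteratedDeriv j f (X ω) ∂μ) * (∫ ω, ε ω ^ j ∂μ) / j !|
      ≤ b₁ * (∫ ω, |ε ω| ^ (n + 1) ∂μ) + b₂ * ∫ ω, |ε ω| ^ (n + p) ∂μ := by
  obtain ⟨hT, hT_eq⟩ := integrable_taylorSum_and_integral_eq hf hind hfX hε
  have hρ : MonotoneOn (fun t : ℝ => b₁ * t + b₂ * t ^ p) (Set.Ici 0) :=
    fun a ha b _ hab => by
      have : 0 ≤ a := ha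
      dsimp only
      gcongr
  have hpt : ∀ ω, |f (X ω + ε ω) - taylorSum f n (X ω) (ε ω)|
      ≤ b₁ * |ε ω| ^ (n + 1) + b₂ * |ε ω| ^ (n + p) := fun ω =>
    (abs_sub_taylorSum_le hρ hf hmod (X ω) (ε ω)).trans_eq (by ring)
  rw [← hT_eq, ← integral_sub hfXε hT, ← integral_const_mul, ← integral_const_mul,
    ← integral_add (hε₁.const_mul _) (hε₂.const_mul _)]
  exact abs_integral_le_integral_abs.trans
    (integral_mono (hfXε.sub hT).abs ((hε₁.const_mul _).add (hε₂.const_mul _)) hpt)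

theorem abs_integral_iteratedDeriv_sub_taylorMoment_le {g : ℝ → ℝ} {K M : ℕ} {b₁ b₂ : ℝ}
    (hb₁ : 0 ≤ b₁) (hb₂ : 0 ≤ b₂) (hKM : K + 1 ≤ M) (hg : ContDiff ℝ K g)
    (hlip : ∀ x x' : ℝ, |iteratedDeriv K g x' - iteratedDeriv K g x|
      ≤ b₁ * |x' - x| + b₂ * |x' - x| ^ (M - K))
    (hind : IndepFun X ε μ) (hε : ∀ j ≤ M, Integrable (fun ω => ε ω ^ j) μ)
    (hε_abs : ∀ j ≤ M, Integrable (fun ω => |ε ω| ^ j) μ)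
    (hgX : ∀ k ≤ K, Integrable (fun ω => iteratedDeriv k g (X ω)) μ) {k : ℕ} (hk : k ≤ K)
    (hgXε : Integrable (fun ω => iteratedDeriv k g (X ω + ε ω)) μ) :
    |(∫ ω, iteratedDeriv k g (X ω + ε ω) ∂μ) -
        taylorMoment (fun i => ∫ ω, iteratedDeriv i g (X ω) ∂μ) (fun j => ∫ ω, ε ω ^ j ∂μ) K k|
      ≤ b₁ * (∫ ω, |ε ω| ^ (K - k + 1) ∂μ) + b₂ * ∫ ω, |ε ω| ^ (M - k) ∂μ := by
  have h := abs_integral_sub_sum_moments_le hb₁ hb₂ (hg.iteratedDeriv_of_le hk)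
    (by simpa only [iteratedDeriv_iteratedDeriv, Nat.add_sub_cancel' hk] using hlip) hind
    (fun j hj => by simpa only [iteratedDeriv_iteratedDeriv] using hgX (k + j) (by omega))
    (fun j hj => hε j (by omega)) (hε_abs _ (by omega)) (hε_abs _ (by omega)) hgXε
  simpa only [taylorMoment, iteratedDeriv_iteratedDeriv, show K - k + (M - K) = M - k by omega]
    using h

lemma integral_correctedFun (g : ℝ → ℝ) (K : ℕ) (γ : ℕ → ℝ) {Y : Ω → ℝ}
    (hint : ∀ k ≤ K, Integrable (fun ω => iteratedDeriv k g (Y ω)) μ) :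
    ∫ ω, correctedFun g K γ (Y ω) ∂μ =
      (∫ ω, g (Y ω) ∂μ) - ∑ k ∈ Icc 2 K, γ k * ∫ ω, iteratedDeriv k g (Y ω) ∂μ := by
  have hterm : ∀ k ∈ Icc 2 K, Integrable (fun ω => γ k * iteratedDeriv k g (Y ω)) μ :=
    fun k hk => (hint k (mem_Icc.1 hk).2).const_mul _
  simp only [correctedFun]
  rw [integral_sub (by simpa using hint 0 (Nat.zero_le K)) (integrable_finsetSum _ hterm),
    integral_finsetSum _ hterm]
  simp only [integral_const_mul]

end Expectation

section Moments

variable {Ω : Type*} [MeasurableSpace Ω] {μ : Measure Ω} {ε : Ω → ℝ}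

lemma pow_le_integral_abs_pow [IsProbabilityMeasure μ] {σ : ℝ} (hσ : 0 ≤ σ)
    (hσ2 : ∫ ω, ε ω ^ 2 ∂μ = σ ^ 2) (h2 : Integrable (fun ω => ε ω ^ 2) μ) {n : ℕ} (hn : 2 ≤ n)
    (hn_int : Integrable (fun ω => |ε ω| ^ n) μ) :
    σ ^ n ≤ ∫ ω, |ε ω| ^ n ∂μ := by
  have hq : 1 ≤ (n : ℝ) / 2 := by rw [le_div_iff₀ two_pos]; exact_mod_cast hn
  have hsq : ∀ t : ℝ, 0 ≤ t → (t ^ 2) ^ ((n : ℝ) / 2) = t ^ n := fun t ht => by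
    rw [← Real.rpow_natCast t 2, ← Real.rpow_mul ht, ← Real.rpow_natCast]
    congr 1
    push_cast
    ring
  have hsq_abs : ∀ ω, (ε ω ^ 2) ^ ((n : ℝ) / 2) = |ε ω| ^ n := fun ω => by
    rw [← sq_abs, hsq _ (abs_nonneg _)]
  have hjensen := (convexOn_rpow hq).map_integral_le
    (Real.continuous_rpow_const (by positivity)).continuousOn isClosed_Ici
    (ae_of_all _ fun ω => sq_nonneg (ε ω)) h2
    (hn_int.congr (ae_of_all _ fun ω => (hsq_abs ω).symm))
  rw [hσ2, hsq σ hσ] at hjensen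
  simpa only [Function.comp_apply, hsq_abs] using hjensen

lemma integral_abs_pow_le_of_standardized {σ C : ℝ} (hσ : 0 < σ) {j : ℕ}
    (h : ∫ ω, |ε ω / σ| ^ j ∂μ ≤ C) : ∫ ω, |ε ω| ^ j ∂μ ≤ |C| * σ ^ j := by
  simp_rw [abs_div, abs_of_pos hσ, div_pow, integral_div] at h
  rw [div_le_iff₀ (by positivity)] at h
  exact h.trans (by gcongr; exact le_abs_self C)

lemma pow_mul_integral_abs_pow_le [IsProbabilityMeasure μ] {σ C : ℝ} (hσ : 0 < σ)
    (hσ2 : ∫ ω, ε ω ^ 2 ∂μ = σ ^ 2) (h2 : Integrable (fun ω => ε ω ^ 2) μ) {k j n : ℕ}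
    (hkjn : k + j = n) (hn : 2 ≤ n) (hC : ∫ ω, |ε ω / σ| ^ j ∂μ ≤ C)
    (hn_int : Integrable (fun ω => |ε ω| ^ n) μ) :
    σ ^ k * ∫ ω, |ε ω| ^ j ∂μ ≤ |C| * ∫ ω, |ε ω| ^ n ∂μ :=
  calc σ ^ k * ∫ ω, |ε ω| ^ j ∂μ ≤ σ ^ k * (|C| * σ ^ j) := by
        gcongr
        exact integral_abs_pow_le_of_standardized hσ hC
    _ = |C| * σ ^ n := by rw [← hkjn, pow_add]; ring
    _ ≤ |C| * ∫ ω, |ε ω| ^ n ∂μ := by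
        gcongr
        exact pow_le_integral_abs_pow hσ.le hσ2 h2 hn hn_int

theorem abs_gammaCoef_mul_le [IsProbabilityMeasure μ] {σ C b₁ b₂ x : ℝ} {K M k : ℕ}
    (hb₁ : 0 ≤ b₁) (hb₂ : 0 ≤ b₂) (hσ : 0 < σ) (hσ2 : ∫ ω, ε ω ^ 2 ∂μ = σ ^ 2)
    (hM : K + 1 ≤ M) (hk : 2 ≤ k) (hkK : k ≤ K)
    (hε_pow : ∀ j ≤ M, Integrable (fun ω => ε ω ^ j) μ)
    (hε_abs : ∀ j ≤ M, Integrable (fun ω => |ε ω| ^ j) μ)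
    (hC : ∀ j ≤ M, ∫ ω, |ε ω / σ| ^ j ∂μ ≤ C)
    (hx : |x| ≤ b₁ * (∫ ω, |ε ω| ^ (K - k + 1) ∂μ) + b₂ * ∫ ω, |ε ω| ^ (M - k) ∂μ) :
    |gammaCoef (fun j => ∫ ω, ε ω ^ j ∂μ) k * x|
      ≤ gammaBound |C| k * |C| * (b₁ * (∫ ω, |ε ω| ^ (K + 1) ∂μ) + b₂ * ∫ ω, |ε ω| ^ M ∂μ) := by
  have hD := gammaBound_nonneg (abs_nonneg C) k
  have hm : ∀ j ≤ K, |∫ ω, ε ω ^ j ∂μ| ≤ |C| * σ ^ j := fun j hj =>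
    (abs_integral_le_integral_abs.trans_eq (by simp_rw [abs_pow])).trans
      (integral_abs_pow_le_of_standardized hσ (hC j (by omega)))
  have hweight : ∀ {j n : ℕ}, k + j = n → n ≤ M →
      σ ^ k * ∫ ω, |ε ω| ^ j ∂μ ≤ |C| * ∫ ω, |ε ω| ^ n ∂μ := fun hkjn hn =>
    pow_mul_integral_abs_pow_le hσ hσ2 (hε_pow 2 (by omega)) hkjn (by omega) (hC _ (by omega))
      (hε_abs _ hn)
  calc _ ≤ gammaBound |C| k * σ ^ k *
        (b₁ * (∫ ω, |ε ω| ^ (K - k + 1) ∂μ) + b₂ * ∫ ω, |ε ω| ^ (M - k) ∂μ) := by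
        rw [abs_mul]
        exact mul_le_mul (abs_gammaCoef_le _ (abs_nonneg C) hσ.le hm hkK) hx (abs_nonneg _)
          (by positivity)
    _ = gammaBound |C| k * (b₁ * (σ ^ k * ∫ ω, |ε ω| ^ (K - k + 1) ∂μ) +
          b₂ * (σ ^ k * ∫ ω, |ε ω| ^ (M - k) ∂μ)) := by ring
    _ ≤ gammaBound |C| k * (b₁ * (|C| * ∫ ω, |ε ω| ^ (K + 1) ∂μ) +
          b₂ * (|C| * ∫ ω, |ε ω| ^ M ∂μ)) := by
        gcongr gammaBound |C| k * (b₁ * ?_ + b₂ * ?_)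
        · exact hweight (by omega) hM
        · exact hweight (by omega) le_rfl
    _ = _ := by ring

end Moments

theorem corrected_moment_validity_general
    {Ω : Type} [MeasurableSpace Ω] (μ : Measure Ω) [IsProbabilityMeasure μ]
    (K M : ℕ) (hM : K + 1 ≤ M)
    (g : ℝ → ℝ) (b₁ b₂ Bg Cm : ℝ) (hb₁ : 0 ≤ b₁) (hb₂ : 0 ≤ b₂)
    (hg : ContDiff ℝ K g)
    (hlip : ∀ x x' : ℝ, |iteratedDeriv K g x' - iteratedDeriv K g x|
        ≤ b₁ * |x' - x| + b₂ * |x' - x| ^ (M - K)) :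
    ∃ C : ℝ, 0 ≤ C ∧
      ∀ (Xs ε : Ω → ℝ) (σ : ℝ), Measurable Xs → Measurable ε →
        IndepFun Xs ε μ →
        (∫ ω, ε ω ∂μ) = 0 → 0 < σ → (∫ ω, ε ω ^ 2 ∂μ) = σ ^ 2 →
        (∀ m ≤ M, Integrable (fun ω => |ε ω| ^ m) μ) →
        (∀ m ≤ M, (∫ ω, |ε ω / σ| ^ m ∂μ) ≤ Cm) →
        (∀ k ≤ K, Integrable (fun ω => iteratedDeriv k g (Xs ω)) μ) →
        (∀ k ≤ K, (∫ ω, |iteratedDeriv k g (Xs ω)| ∂μ) ≤ Bg) →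
        (∀ k ≤ K, Integrable (fun ω => iteratedDeriv k g (Xs ω + ε ω)) μ) →
        Integrable (fun ω => g (Xs ω + ε ω)) μ →
        |(∫ ω, correctedFun g K (gammaCoef fun j => ∫ ω', ε ω' ^ j ∂μ) (Xs ω + ε ω) ∂μ)
            - (∫ ω, g (Xs ω) ∂μ)|
          ≤ C * ((∫ ω, |ε ω| ^ (K + 1) ∂μ) + (∫ ω, |ε ω| ^ M ∂μ)) := by
  set D := gammaBound |Cm|
  have hD : 0 ≤ ∑ k ∈ Icc 2 K, D k := sum_nonneg fun k _ => gammaBound_nonneg (abs_nonneg Cm) k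
  refine ⟨(b₁ + b₂) * (1 + |Cm| * ∑ k ∈ Icc 2 K, D k), by positivity, ?_⟩
  intro Xs ε σ _ hε hind hε_mean hσ hσ2 hε_abs hCm hgX _ hgXε _
  set m : ℕ → ℝ := fun j => ∫ ω, ε ω ^ j ∂μ
  set G : ℕ → ℝ := fun i => ∫ ω, iteratedDeriv i g (Xs ω) ∂μ
  set A := ∫ ω, |ε ω| ^ (K + 1) ∂μ
  set B := ∫ ω, |ε ω| ^ M ∂μ
  set e : ℕ → ℝ := fun k => (∫ ω, iteratedDeriv k g (Xs ω + ε ω) ∂μ) - taylorMoment G m K k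
  have hε_pow : ∀ j ≤ M, Integrable (fun ω => ε ω ^ j) μ := fun j hj =>
    (integrable_norm_iff (hε.pow_const j).aestronglyMeasurable).1
      (by simpa only [Real.norm_eq_abs, abs_pow] using hε_abs j hj)
  have he : ∀ k ≤ K, |e k| ≤ b₁ * (∫ ω, |ε ω| ^ (K - k + 1) ∂μ) + b₂ * ∫ ω, |ε ω| ^ (M - k) ∂μ :=
    fun k hk => abs_integral_iteratedDeriv_sub_taylorMoment_le hb₁ hb₂ hM hg hlip hind hε_pow
      hε_abs hgX hk (hgXε k hk)
  have hdecomp : (∫ ω, correctedFun g K (gammaCoef m) (Xs ω + ε ω) ∂μ) - ∫ ω, g (Xs ω) ∂μ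
      = e 0 - ∑ k ∈ Icc 2 K, gammaCoef m k * e k := by
    rw [integral_correctedFun g K _ hgXε, show ∫ ω, g (Xs ω) ∂μ = G 0 by simp [G],
      ← taylorMoment_sub_sum_gammaCoef G m (by simp [m]) (by simpa [m] using hε_mean) K]
    simp only [e, mul_sub, sum_sub_distrib, iteratedDeriv_zero]
    ring
  have hA : 0 ≤ A := integral_nonneg fun ω => by positivity
  have hB : 0 ≤ B := integral_nonneg fun ω => by positivity
  rw [hdecomp]
  calc _ ≤ (1 + |Cm| * ∑ k ∈ Icc 2 K, D k) * (b₁ * A + b₂ * B) :=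
        abs_sub_sum_le (by simpa using he 0 (Nat.zero_le K)) fun k hk =>
          abs_gammaCoef_mul_le hb₁ hb₂ hσ hσ2 hM (mem_Icc.1 hk).1 (mem_Icc.1 hk).2 hε_pow hε_abs
            hCm (he k (mem_Icc.1 hk).2)
    _ ≤ (1 + |Cm| * ∑ k ∈ Icc 2 K, D k) * ((b₁ + b₂) * (A + B)) := by
        gcongr
        nlinarith [mul_nonneg hb₁ hB, mul_nonneg hb₂ hA]
    _ = _ := by ring

theorem corrected_moment_validity
    {Ω : Type} [MeasurableSpace Ω] (μ : Measure Ω) [IsProbabilityMeasure μ]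
    (K M : ℕ) (hK : 2 ≤ K) (hM : K + 1 ≤ M)
    (g : ℝ → ℝ) (b₁ b₂ Bg Cm : ℝ) (hb₁ : 0 ≤ b₁) (hb₂ : 0 ≤ b₂)
    (hg : ContDiff ℝ K g)
    (hlip : ∀ x x' : ℝ, |iteratedDeriv K g x' - iteratedDeriv K g x|
        ≤ b₁ * |x' - x| + b₂ * |x' - x| ^ (M - K)) :
    ∃ C : ℝ, 0 ≤ C ∧
      ∀ (Xs ε : Ω → ℝ) (σ : ℝ), Measurable Xs → Measurable ε →
        IndepFun Xs ε μ →
        (∫ ω, ε ω ∂μ) = 0 → 0 < σ → (∫ ω, ε ω ^ 2 ∂μ) = σ ^ 2 →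
        (∀ m ≤ M, Integrable (fun ω => |ε ω| ^ m) μ) →
        (∀ m ≤ M, (∫ ω, |ε ω / σ| ^ m ∂μ) ≤ Cm) →
        (∀ k ≤ K, Integrable (fun ω => iteratedDeriv k g (Xs ω)) μ) →
        (∀ k ≤ K, (∫ ω, |iteratedDeriv k g (Xs ω)| ∂μ) ≤ Bg) →
        (∀ k ≤ K, Integrable (fun ω => iteratedDeriv k g (Xs ω + ε ω)) μ) →
        Integrable (fun ω => g (Xs ω + ε ω)) μ →
        |(∫ ω, correctedFun g K (gammaCoef fun j => ∫ ω', ε ω' ^ j ∂μ) (Xs ω + ε ω) ∂μ)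
            - (∫ ω, g (Xs ω) ∂μ)|
          ≤ C * ((∫ ω, |ε ω| ^ (K + 1) ∂μ) + (∫ ω, |ε ω| ^ M ∂μ)) :=
  corrected_moment_validity_general μ K M hM g b₁ b₂ Bg Cm hb₁ hb₂ hg hlip
end
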